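/- Every matroid independence complex is vertex decomposable, and every connected graph (viewed as a 1-dimensional simplicial complex, together with its vertices) is vertex decomposable. -/

import Mathlib

open Finset

open scoped Classical

/-- An (abstract) simplicial complex on the vertex set `[n] = Fin n`:
a downward-closed collection of finite subsets containing the empty set. -/
structure SC (n : ℕ) where
  faces : Finset (Finset (Fin n))
  down : ∀ F ∈ faces, ∀ G : Finset (Fin n), G ⊆ F → G ∈ faces
  empty_mem : (∅ : Finset (Fin n)) ∈ faces

namespace SC

variable {n : ℕ}

/-- `F` is a facet (inclusion-maximal face) of `Δ`. -/
def isFacet (Δ : SC n) (F : Finset (Fin n)) : Prop :=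
  F ∈ Δ.faces ∧ ∀ G ∈ Δ.faces, F ⊆ G → F = G

/-- The dimension of `Δ` (as an integer, so that `dim {∅} = -1`). -/
def dim (Δ : SC n) : ℤ :=
  ((Δ.faces.sup Finset.card : ℕ) : ℤ) - 1

/-- `Δ` is pure: all facets have the same cardinality (hence dimension). -/
def Pure (Δ : SC n) : Prop :=
  ∀ F G : Finset (Fin n), Δ.isFacet F → Δ.isFacet G → F.card = G.card

/-- The deletion `Δ_{-v}` of the vertex `v`. -/
noncomputable def del (Δ : SC n) (v : Fin n) : SC n where
  faces := Δ.faces.filter (fun F => v ∉ F)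
  down := by
    intro F hF G hG
    simp only [Finset.mem_filter] at *
    exact ⟨Δ.down F hF.1 G hG, fun hv => hF.2 (hG hv)⟩
  empty_mem := by simp [Δ.empty_mem]

/-- The link `link_Δ(v)` of the vertex `v`. -/
noncomputable def link (Δ : SC n) (v : Fin n) : SC n where
  faces := insert ∅ (Δ.faces.filter (fun F => v ∉ F ∧ insert v F ∈ Δ.faces))
  down := by
    intro F hF G hG
    simp only [Finset.mem_insert, Finset.mem_filter] at *
    rcases hF with h | ⟨h1, h2, h3⟩
    · left; subst h; exact Finset.subset_empty.mp hG
    · right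
      exact ⟨Δ.down F h1 G hG, fun hv => h2 (hG hv),
        Δ.down _ h3 _ (Finset.insert_subset_insert v hG)⟩
  empty_mem := by simp

/-- The link `link_Δ(S)` of a face `S`. -/
noncomputable def linkF (Δ : SC n) (S : Finset (Fin n)) : SC n where
  faces := insert ∅ (Δ.faces.filter (fun G => G ∩ S = ∅ ∧ G ∪ S ∈ Δ.faces))
  down := by
    intro F hF G hG
    simp only [Finset.mem_insert, Finset.mem_filter] at *
    rcases hF with h | ⟨h1, h2, h3⟩
    · left; subst h; exact Finset.subset_empty.mp hG
    · right
      refine ⟨Δ.down F h1 G hG, ?_, Δ.down _ h3 _ (Finset.union_subset_union_left hG)⟩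
      apply Finset.eq_empty_of_forall_notMem
      intro x hx
      simp only [Finset.mem_inter] at hx
      have : x ∈ F ∩ S := Finset.mem_inter.mpr ⟨hG hx.1, hx.2⟩
      simp [h2] at this
  empty_mem := by simp

/-- The restriction `Δ|_σ`. -/
noncomputable def restrict (Δ : SC n) (σ : Finset (Fin n)) : SC n where
  faces := Δ.faces.filter (fun F => F ⊆ σ)
  down := by
    intro F hF G hG
    simp only [Finset.mem_filter] at *
    exact ⟨Δ.down F hF.1 G hG, hG.trans hF.2⟩
  empty_mem := by simp [Δ.empty_mem]

/-- The subcomplex `Δ_{⟨-v⟩}` generated by the facets of `Δ` not containing `v`. -/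
noncomputable def genDel (Δ : SC n) (v : Fin n) : SC n where
  faces := insert ∅ (Δ.faces.filter (fun G => ∃ F ∈ Δ.faces, Δ.isFacet F ∧ v ∉ F ∧ G ⊆ F))
  down := by
    intro F hF G hG
    simp only [Finset.mem_insert, Finset.mem_filter] at *
    rcases hF with h | ⟨h1, F', hF'⟩
    · left; subst h; exact Finset.subset_empty.mp hG
    · right
      exact ⟨Δ.down F h1 G hG, F', hF'.1, hF'.2.1, hF'.2.2.1, hG.trans hF'.2.2.2⟩
  empty_mem := by simp

/-- `Δ` is a cone with apex `v`: every facet contains `v`. -/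
def IsCone (Δ : SC n) (v : Fin n) : Prop :=
  ∀ F, Δ.isFacet F → v ∈ F

end SC

section Margins

variable {n : ℕ}

/-- The `F`-margin of a table `T`, evaluated at the assignment `a` on `F`:
the sum of the entries of `T` over all cells agreeing with `a` on `F`. -/
def margin {R : Type*} [AddCommMonoid R] (d : Fin n → ℕ) (T : (∀ j, Fin (d j)) → R)
    (F : Finset (Fin n)) (a : ∀ j, Fin (d j)) : R :=
  ∑ b ∈ Finset.univ.filter (fun b : ∀ j, Fin (d j) => ∀ j ∈ F, b j = a j), T b

/-- `T` lies in the kernel of the marginal (design) matrix `M(Δ,d)` of the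
hierarchical model: all margins along facets of `Δ` vanish. -/
def inKer {R : Type*} [AddCommMonoid R] (Δ : SC n) (d : Fin n → ℕ)
    (T : (∀ j, Fin (d j)) → R) : Prop :=
  ∀ F : Finset (Fin n), Δ.isFacet F → ∀ a, margin d T F a = 0

end Margins
section Cohomology

variable {n : ℕ}

/-- Reduced simplicial cochains "of size `s`" (i.e. cohomological degree `s-1`):
functions on the faces of `Δ` with `s` vertices, with values in `K`.
For `s = 0` this is the span of the empty face. -/
abbrev Cch (Δ : SC n) (K : Type) [Field K] (s : ℕ) : Type :=
  {F : Finset (Fin n) // F ∈ Δ.faces ∧ F.card = s} → K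

/-- The simplicial coboundary map from cochains of size `s` (degree `s-1`)
to cochains of size `s+1` (degree `s`), with the usual signs. -/
noncomputable def deltaLin (Δ : SC n) (K : Type) [Field K] (s : ℕ) :
    Cch Δ K s →ₗ[K] Cch Δ K (s + 1) where
  toFun φ := fun F => ∑ v ∈ F.1.attach,
    ((-1 : K) ^ ((F.1.filter (fun w => w < v.1)).card)) *
      φ ⟨F.1.erase v.1,
        ⟨Δ.down F.1 F.2.1 _ (Finset.erase_subset _ _), by
          simp [Finset.card_erase_of_mem v.2, F.2.2]⟩⟩
  map_add' φ ψ := by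
    funext F
    simp only [Pi.add_apply, mul_add, Finset.sum_add_distrib]
  map_smul' c φ := by
    funext F
    simp only [Pi.smul_apply, smul_eq_mul, RingHom.id_apply, Finset.mul_sum]
    exact Finset.sum_congr rfl (fun v _ => by ring)

/-- The reduced simplicial cohomology `H̃^j(Δ; K)` (for `j ≥ 0`) is nonzero:
there is a `j`-cocycle which is not a coboundary. -/
def HredNe (Δ : SC n) (K : Type) [Field K] (j : ℕ) : Prop :=
  ∃ φ : Cch Δ K (j + 1), deltaLin Δ K (j + 1) φ = 0 ∧
    ∀ ψ : Cch Δ K j, deltaLin Δ K j ψ ≠ φ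

/-- The reduced simplicial cohomology `H̃^j(Δ; K)` is one-dimensional (`≅ K`). -/
def HOneDim (Δ : SC n) (K : Type) [Field K] (j : ℕ) : Prop :=
  ∃ φ : Cch Δ K (j + 1), deltaLin Δ K (j + 1) φ = 0 ∧
    (∀ ψ : Cch Δ K j, deltaLin Δ K j ψ ≠ φ) ∧
    ∀ φ' : Cch Δ K (j + 1), deltaLin Δ K (j + 1) φ' = 0 →
      ∃ (c : K) (ψ : Cch Δ K j), φ' = c • φ + deltaLin Δ K j ψ

/-- `dim_K H̃^{s-1}(Δ; K)`, computed from the cochain complex. -/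
noncomputable def hdim (Δ : SC n) (K : Type) [Field K] (s : ℕ) : ℕ :=
  Module.finrank K (LinearMap.ker (deltaLin Δ K s)) -
    (if s = 0 then 0 else Module.finrank K (LinearMap.range (deltaLin Δ K (s - 1))))

/-- The graded Betti number `β_{i,j}` of the Stanley-Reisner ring of `Δ`,
over the polynomial ring on the variables indexed by `W`, as given by
Hochster's formula: `β_{i,j}(R/I_Δ) = Σ_{σ ⊆ W, |σ|=j} dim_K H̃^{j-i-1}(Δ|_σ; K)`. -/
noncomputable def bettiOn (W : Finset (Fin n)) (Δ : SC n) (K : Type) [Field K]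
    (i j : ℕ) : ℕ :=
  ∑ σ ∈ W.powerset.filter (fun σ => σ.card = j), hdim (Δ.restrict σ) K (j - i)

/-- Reisner's criterion: `Δ` is Cohen-Macaulay over `K` iff for every face `F`,
the reduced cohomology of `link_Δ(F)` vanishes below its dimension. -/
def IsCM (Δ : SC n) (K : Type) [Field K] : Prop :=
  ∀ F ∈ Δ.faces, ∀ i : ℕ, (i : ℤ) < (Δ.linkF F).dim → ¬ HredNe (Δ.linkF F) K i

/-- `Δ` is disconnected (equivalently, `H̃^0(Δ;K) ≠ 0`): its vertex set splits into
two nonempty parts with no edge between them. -/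
def Disconn (Δ : SC n) : Prop :=
  ∃ A B : Finset (Fin n),
    (∃ a ∈ A, ({a} : Finset (Fin n)) ∈ Δ.faces) ∧
    (∃ b ∈ B, ({b} : Finset (Fin n)) ∈ Δ.faces) ∧
    Disjoint A B ∧ (∀ w : Fin n, ({w} : Finset (Fin n)) ∈ Δ.faces → w ∈ A ∪ B) ∧
    ∀ a ∈ A, ∀ b ∈ B, ({a, b} : Finset (Fin n)) ∉ Δ.faces

end Cohomology
section VD

variable {n : ℕ}

/-- Vertex decomposability: `Δ` is pure, and is either `{∅}` or has a vertex `v`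
whose deletion and link are both vertex decomposable. -/
inductive IsVD : {n : ℕ} → SC n → Prop
  | triv {n : ℕ} (Δ : SC n) (h : Δ.faces = {∅}) : IsVD Δ
  | step {n : ℕ} (Δ : SC n) (hp : Δ.Pure) (v : Fin n)
      (hd : IsVD (Δ.del v)) (hl : IsVD (Δ.link v)) : IsVD Δ

/-- `Δ` is shellable: its facets admit an ordering `F_1, …, F_t` such that for each
`k ≥ 2` the complex `(⋃_{i<k} ⟨F_i⟩) ∩ ⟨F_k⟩` is pure of dimension `dim F_k - 1`,
i.e. every face of it is contained in a face of it of cardinality `|F_k| - 1`. -/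
def Shellable (Δ : SC n) : Prop :=
  ∃ L : List (Finset (Fin n)), L.Nodup ∧ (∀ F, Δ.isFacet F ↔ F ∈ L) ∧
    ∀ (k : ℕ) (hk : k < L.length), 0 < k →
      ∀ G : Finset (Fin n), G ⊆ L.get ⟨k, hk⟩ →
        (∃ (i : ℕ) (hi : i < L.length), i < k ∧ G ⊆ L.get ⟨i, hi⟩) →
        ∃ G' : Finset (Fin n), G ⊆ G' ∧ G' ⊆ L.get ⟨k, hk⟩ ∧
          G'.card = (L.get ⟨k, hk⟩).card - 1 ∧
          ∃ (i : ℕ) (hi : i < L.length), i < k ∧ G' ⊆ L.get ⟨i, hi⟩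

end VD

section Ideals

variable {n : ℕ}

/-- The Stanley-Reisner ideal of `Δ`: the ideal of `K[x_1,…,x_n]` generated by the
squarefree monomials `x_σ = ∏_{i ∈ σ} x_i` for the non-faces `σ ∉ Δ`. -/
noncomputable def SRideal (K : Type) [Field K] (Δ : SC n) : Ideal (MvPolynomial (Fin n) K) :=
  Ideal.span ((fun σ : Finset (Fin n) => ∏ i ∈ σ, (MvPolynomial.X i : MvPolynomial (Fin n) K)) ''
    {σ : Finset (Fin n) | σ ∉ Δ.faces})

end Ideals

section Misc

/-- The trivial complex `{∅}` on `[n]`. -/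
noncomputable def trivialSC (n : ℕ) : SC n where
  faces := {∅}
  down := by
    intro F hF G hG
    simp only [Finset.mem_singleton] at *
    subst hF
    exact Finset.subset_empty.mp hG
  empty_mem := by simp

/-- The alternating 0-1 vector `ε_k` with blocks of length `k`: entry `i` is the
parity of `i / k`, so it consists of alternating blocks of `k` zeros and `k` ones. -/
def epsFun (k i : ℕ) : ℕ := (i / k) % 2

/-- The vector `α` defined by `α_1 = (0)` and `α_d = (α_{d-1}, complement α_{d-1})`:
entry `i` is the parity of the binary digit sum of `i` (Thue–Morse). -/
def alphaFun (i : ℕ) : ℕ := (Nat.digits 2 i).sum % 2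

end Misc

/-!
Both classes are closed under taking deletions and links of a suitable vertex, so vertex
decomposability follows by induction on the number of faces. A matroid complex is pure by the
augmentation property (restrict to `I ∪ J` and compare facets), and augmentation for the link
of `v` is augmentation in `Δ` for faces containing `v`; any vertex works. For a connected graph,
delete a vertex whose removal keeps the 1-skeleton connected (a leaf of a spanning tree); its
link is edgeless, and an edgeless complex is handled by deleting any vertex.
-/

namespace SC

variable {n : ℕ} {Δ : SC n} {v x : Fin n} {F I : Finset (Fin n)}

@[ext]
lemma ext {Δ₁ Δ₂ : SC n} (h : Δ₁.faces = Δ₂.faces) : Δ₁ = Δ₂ := by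
  cases Δ₁; cases Δ₂; congr

@[simp]
lemma mem_del : F ∈ (Δ.del v).faces ↔ F ∈ Δ.faces ∧ v ∉ F := by
  simp [del]

@[simp]
lemma mem_link :
    F ∈ (Δ.link v).faces ↔ F = ∅ ∨ F ∈ Δ.faces ∧ v ∉ F ∧ insert v F ∈ Δ.faces := by
  simp [link]

@[simp]
lemma mem_restrict {σ : Finset (Fin n)} : F ∈ (Δ.restrict σ).faces ↔ F ∈ Δ.faces ∧ F ⊆ σ := by
  simp [restrict]

lemma mem_link_of_mem_faces_singleton (hv : {v} ∈ Δ.faces) :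
    F ∈ (Δ.link v).faces ↔ v ∉ F ∧ insert v F ∈ Δ.faces := by
  rw [mem_link]
  constructor
  · rintro (rfl | ⟨-, hvF, hF⟩)
    · simpa using hv
    · exact ⟨hvF, hF⟩
  · exact fun ⟨hvF, hF⟩ => .inr ⟨Δ.down _ hF _ (subset_insert v F), hvF, hF⟩

lemma exists_mem_faces_singleton (h : Δ.faces ≠ {∅}) : ∃ v, {v} ∈ Δ.faces := by
  obtain ⟨F, hF, hFne⟩ : ∃ F ∈ Δ.faces, F ≠ ∅ := by
    by_contra! hall
    exact h (eq_singleton_iff_unique_mem.2 ⟨Δ.empty_mem, hall⟩)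
  obtain ⟨x, hx⟩ := nonempty_iff_ne_empty.2 hFne
  exact ⟨x, Δ.down F hF _ (singleton_subset_iff.2 hx)⟩

lemma card_del_lt (hv : {v} ∈ Δ.faces) : (Δ.del v).faces.card < Δ.faces.card :=
  card_lt_card <| (ssubset_iff_of_subset fun _ hF => (mem_del.1 hF).1).2 ⟨{v}, hv, by simp⟩

lemma card_link_lt (hv : {v} ∈ Δ.faces) : (Δ.link v).faces.card < Δ.faces.card := by
  refine card_lt_card <| (ssubset_iff_of_subset fun F hF => ?_).2 ⟨{v}, hv, by simp⟩
  rcases mem_link.1 hF with rfl | ⟨hF, -⟩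
  exacts [Δ.empty_mem, hF]

lemma card_le_of_mem_del {k : ℕ} (hk : ∀ F ∈ Δ.faces, F.card ≤ k) :
    ∀ F ∈ (Δ.del v).faces, F.card ≤ k :=
  fun F hF => hk F (mem_del.1 hF).1

lemma card_le_of_mem_link {k : ℕ} (hk : ∀ F ∈ Δ.faces, F.card ≤ k + 1) :
    ∀ F ∈ (Δ.link v).faces, F.card ≤ k := by
  intro F hF
  rcases mem_link.1 hF with rfl | ⟨-, hvF, hF⟩
  · simp
  · simpa [card_insert_of_notMem hvF] using hk _ hF

lemma exists_isFacet_superset (hI : I ∈ Δ.faces) : ∃ F, I ⊆ F ∧ Δ.isFacet F := by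
  obtain ⟨F, hF, hmax⟩ := ({F ∈ Δ.faces | I ⊆ F}).exists_max_image card ⟨I, by simp [hI]⟩
  rw [mem_filter] at hF
  refine ⟨F, hF.2, hF.1, fun G hG hFG => eq_of_subset_of_card_le hFG ?_⟩
  exact hmax G (mem_filter.2 ⟨hG, hF.2.trans hFG⟩)

lemma isFacet.insert_notMem (hF : Δ.isFacet F) (hx : x ∉ F) : insert x F ∉ Δ.faces :=
  fun h => hx (hF.2 _ h (subset_insert x F) ▸ mem_insert_self x F)

lemma faces_eq_singleton_empty (h : Δ.isFacet ∅) : Δ.faces = {∅} :=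
  eq_singleton_iff_unique_mem.2 ⟨Δ.empty_mem, fun G hG => (h.2 G hG (empty_subset G)).symm⟩

lemma pure_of_not_card_lt (h : ∀ F G, Δ.isFacet F → Δ.isFacet G → ¬ F.card < G.card) :
    Δ.Pure :=
  fun F G hF hG => le_antisymm (not_lt.1 (h G F hG hF)) (not_lt.1 (h F G hF hG))

lemma pure_of_card_le_one (h : ∀ F ∈ Δ.faces, F.card ≤ 1) (h0 : Δ.faces ≠ {∅}) : Δ.Pure := by
  have hcard : ∀ F, Δ.isFacet F → F.card = 1 := fun F hF =>
    le_antisymm (h F hF.1) <| one_le_card.2 <| nonempty_iff_ne_empty.2 fun hF0 =>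
      h0 (faces_eq_singleton_empty (hF0 ▸ hF))
  exact fun F G hF hG => (hcard F hF).trans (hcard G hG).symm

end SC

open SC

theorem IsVD.of_exists_del_link {n : ℕ} {P : SC n → Prop}
    (step : ∀ Δ, P Δ → Δ.faces ≠ {∅} →
      Δ.Pure ∧ ∃ v, {v} ∈ Δ.faces ∧ P (Δ.del v) ∧ P (Δ.link v))
    (Δ : SC n) (hΔ : P Δ) : IsVD Δ := by
  induction hN : Δ.faces.card using Nat.strong_induction_on generalizing Δ with
  | _ N ih =>
    by_cases h0 : Δ.faces = {∅}
    · exact .triv Δ h0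
    obtain ⟨hpure, v, hv, hdel, hlink⟩ := step Δ hΔ h0
    exact .step Δ hpure v (ih _ (hN ▸ card_del_lt hv) _ hdel rfl)
      (ih _ (hN ▸ card_link_lt hv) _ hlink rfl)

namespace SC

variable {n : ℕ} {Δ : SC n} {v : Fin n} {I J : Finset (Fin n)}

def IsMatroid (Δ : SC n) : Prop := ∀ σ, (Δ.restrict σ).Pure

lemma IsMatroid.exists_insert_mem (hM : Δ.IsMatroid) (hI : I ∈ Δ.faces) (hJ : J ∈ Δ.faces)
    (h : I.card < J.card) : ∃ x ∈ J, x ∉ I ∧ insert x I ∈ Δ.faces := by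
  obtain ⟨F, hIF, hF⟩ := exists_isFacet_superset (Δ := Δ.restrict (I ∪ J))
    (mem_restrict.2 ⟨hI, subset_union_left⟩)
  obtain ⟨G, hJG, hG⟩ := exists_isFacet_superset (Δ := Δ.restrict (I ∪ J))
    (mem_restrict.2 ⟨hJ, subset_union_right⟩)
  have hIF' : I ⊂ F := hIF.ssubset_of_ne <| by
    rintro rfl
    exact (h.trans_le ((card_le_card hJG).trans (hM _ _ _ hG hF).le)).false
  obtain ⟨x, hxF, hxI⟩ := exists_of_ssubset hIF'
  obtain ⟨hFΔ, hFIJ⟩ := mem_restrict.1 hF.1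
  have hxJ : x ∈ J := (mem_union.1 (hFIJ hxF)).resolve_left hxI
  exact ⟨x, hxJ, hxI, Δ.down F hFΔ _ (insert_subset hxF hIF)⟩

lemma IsMatroid.pure (hM : Δ.IsMatroid) : Δ.Pure :=
  pure_of_not_card_lt fun _ _ hF hG hlt =>
    let ⟨_, _, hxF, hins⟩ := hM.exists_insert_mem hF.1 hG.1 hlt
    hF.insert_notMem hxF hins

lemma IsMatroid.del (hM : Δ.IsMatroid) (v : Fin n) : (Δ.del v).IsMatroid := by
  intro σ
  convert hM (σ.erase v) using 1
  ext F
  simp only [mem_restrict, mem_del, subset_erase]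
  tauto

lemma IsMatroid.link (hM : Δ.IsMatroid) (v : Fin n) : (Δ.link v).IsMatroid := by
  intro σ
  refine pure_of_not_card_lt fun F G hF hG hlt => ?_
  obtain ⟨hFl, hFσ⟩ := mem_restrict.1 hF.1
  obtain ⟨hGl, hGσ⟩ := mem_restrict.1 hG.1
  have hGne : G ≠ ∅ := by rintro rfl; simp at hlt
  obtain ⟨-, hvG, hvGΔ⟩ := (mem_link.1 hGl).resolve_left hGne
  have hv : {v} ∈ Δ.faces := Δ.down _ hvGΔ _ (by simp)
  obtain ⟨hvF, hvFΔ⟩ := (mem_link_of_mem_faces_singleton hv).1 hFl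
  have hcard : (insert v F).card < (insert v G).card := by
    rwa [card_insert_of_notMem hvF, card_insert_of_notMem hvG, Nat.add_lt_add_iff_right]
  obtain ⟨x, hxG, hxF, hins⟩ := hM.exists_insert_mem hvFΔ hvGΔ hcard
  have hxv : x ≠ v := by rintro rfl; simp at hxF
  refine hF.insert_notMem (fun h => hxF (mem_insert_of_mem h)) (mem_restrict.2 ⟨?_, ?_⟩)
  · refine (mem_link_of_mem_faces_singleton hv).2 ⟨?_, by rwa [insert_comm]⟩
    simpa [hxv.symm] using hvF
  · exact insert_subset (hGσ ((mem_insert.1 hxG).resolve_left hxv)) hFσ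

theorem IsMatroid.isVD (hM : Δ.IsMatroid) : IsVD Δ :=
  IsVD.of_exists_del_link (P := IsMatroid) (fun _ hM h0 =>
    let ⟨v, hv⟩ := exists_mem_faces_singleton h0
    ⟨hM.pure, v, hv, hM.del v, hM.link v⟩) Δ hM

def EdgeConnected (Δ : SC n) : Prop :=
  ∀ a b : Fin n, {a} ∈ Δ.faces → {b} ∈ Δ.faces →
    Relation.ReflTransGen (fun x y : Fin n => ({x, y} : Finset (Fin n)) ∈ Δ.faces) a b

def vertices (Δ : SC n) : Set (Fin n) := {v | {v} ∈ Δ.faces}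

def skeleton (Δ : SC n) : SimpleGraph Δ.vertices where
  Adj x y := x ≠ y ∧ ({x.1, y.1} : Finset (Fin n)) ∈ Δ.faces
  symm := ⟨fun _ _ h => ⟨h.1.symm, by rw [pair_comm]; exact h.2⟩⟩
  loopless := ⟨fun _ h => h.1 rfl⟩

lemma EdgeConnected.preconnected_skeleton (h : Δ.EdgeConnected) : Δ.skeleton.Preconnected := by
  rintro ⟨a, ha⟩ ⟨b, hb⟩
  induction h a b ha hb with
  | refl => rfl
  | @tail c d _ hcd ih =>
    have hc : {c} ∈ Δ.faces := Δ.down _ hcd _ (by simp)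
    by_cases hcd' : c = d
    · subst hcd'
      exact ih hc
    · exact (ih hc).trans (SimpleGraph.Adj.reachable ⟨by simpa [Subtype.ext_iff] using hcd', hcd⟩)

lemma edgeConnected_del_of_preconnected {v : Δ.vertices}
    (h : (Δ.skeleton.induce {v}ᶜ).Preconnected) : (Δ.del v).EdgeConnected := by
  intro a b ha hb
  rw [mem_del, mem_singleton] at ha hb
  have hreach := h ⟨⟨a, ha.1⟩, by simpa [Subtype.ext_iff, eq_comm] using ha.2⟩
    ⟨⟨b, hb.1⟩, by simpa [Subtype.ext_iff, eq_comm] using hb.2⟩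
  refine ((SimpleGraph.reachable_iff_reflTransGen _ _).1 hreach).lift (fun p => p.1.1) ?_
  rintro ⟨⟨p, hp⟩, hpv⟩ ⟨⟨q, hq⟩, hqv⟩ hpq
  obtain ⟨-, hpq⟩ := SimpleGraph.induce_adj.1 hpq
  simp only [Set.mem_compl_singleton_iff, ne_eq, Subtype.ext_iff] at hpv hqv
  exact mem_del.2 ⟨hpq, by simp [Ne.symm hpv, Ne.symm hqv]⟩

lemma EdgeConnected.exists_del (h : Δ.EdgeConnected) (hne : Δ.vertices.Nonempty) :
    ∃ v, {v} ∈ Δ.faces ∧ (Δ.del v).EdgeConnected := by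
  have := hne.to_subtype
  have hconn : Δ.skeleton.Connected := ⟨h.preconnected_skeleton⟩
  obtain ⟨v, hv⟩ := hconn.exists_preconnected_induce_compl_singleton_of_finite
  exact ⟨v, v.2, edgeConnected_del_of_preconnected hv⟩

lemma EdgeConnected.pure (h2 : ∀ F ∈ Δ.faces, F.card ≤ 2) (h : Δ.EdgeConnected) {a b : Fin n}
    (hab : a ≠ b) (hE : {a, b} ∈ Δ.faces) : Δ.Pure := by
  have hcard : ∀ F, Δ.isFacet F → F.card = 2 := by
    intro F hF
    refine le_antisymm (h2 F hF.1) (not_lt.1 fun hlt => ?_)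
    rcases (Nat.lt_succ_iff.1 hlt).lt_or_eq with h0 | h1
    · rw [Nat.lt_one_iff, card_eq_zero] at h0
      subst h0
      simp [faces_eq_singleton_empty hF] at hE
    · obtain ⟨w, rfl⟩ := card_eq_one.1 h1
      have : Nontrivial Δ.vertices := ⟨⟨a, Δ.down _ hE _ (by simp)⟩, ⟨b, Δ.down _ hE _ (by simp)⟩,
        fun h => hab (congrArg Subtype.val h)⟩
      obtain ⟨u, huw, hwu⟩ := h.preconnected_skeleton.exists_adj_of_nontrivial ⟨w, hF.1⟩
      exact hF.insert_notMem (x := u) (by simpa [Subtype.ext_iff, eq_comm] using huw)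
        (by rwa [pair_comm])
  exact fun F G hF hG => (hcard F hF).trans (hcard G hG).symm

/-- Links of vertices of a graph are edgeless rather than connected, hence the second disjunct
of the induction predicate. -/
theorem EdgeConnected.isVD_of_card_le_two (h : Δ.EdgeConnected)
    (h2 : ∀ F ∈ Δ.faces, F.card ≤ 2) : IsVD Δ := by
  refine IsVD.of_exists_del_link (P := fun Δ => (∀ F ∈ Δ.faces, F.card ≤ 2) ∧
    (Δ.EdgeConnected ∨ ∀ F ∈ Δ.faces, F.card ≤ 1)) (fun Δ ⟨h2, hconn⟩ h0 => ?_) Δ ⟨h2, .inl h⟩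
  have hlink (v : Fin n) : (∀ F ∈ (Δ.link v).faces, F.card ≤ 2) ∧
      ((Δ.link v).EdgeConnected ∨ ∀ F ∈ (Δ.link v).faces, F.card ≤ 1) :=
    ⟨fun F hF => (card_le_of_mem_link h2 F hF).trans one_le_two, .inr (card_le_of_mem_link h2)⟩
  by_cases hedge : ∃ a b, a ≠ b ∧ {a, b} ∈ Δ.faces
  · obtain ⟨a, b, hab, hE⟩ := hedge
    have hconn : Δ.EdgeConnected :=
      hconn.resolve_right fun h1 => by simpa [card_pair hab] using h1 _ hE
    obtain ⟨v, hv, hdel⟩ := hconn.exists_del ⟨a, Δ.down _ hE _ (by simp)⟩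
    exact ⟨hconn.pure h2 hab hE, v, hv, ⟨card_le_of_mem_del h2, .inl hdel⟩, hlink v⟩
  · have h1 : ∀ F ∈ Δ.faces, F.card ≤ 1 := fun F hF => not_lt.1 fun hlt => by
      obtain ⟨a, b, hab, rfl⟩ := card_eq_two.1 (le_antisymm (h2 F hF) hlt)
      exact hedge ⟨a, b, hab, hF⟩
    obtain ⟨v, hv⟩ := exists_mem_faces_singleton h0
    exact ⟨pure_of_card_le_one h1 h0, v, hv, ⟨card_le_of_mem_del h2, .inr (card_le_of_mem_del h1)⟩,
      hlink v⟩

end SC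

/-- Every matroid complex (all restrictions pure) is vertex
decomposable, and every connected graph (a 1-dimensional complex whose vertices are
pairwise connected by edge paths) is vertex decomposable. -/
theorem matroid_and_connected_graph_vd :
    (∀ (n : ℕ) (Δ : SC n), (∀ σ : Finset (Fin n), (Δ.restrict σ).Pure) → IsVD Δ) ∧
    (∀ (n : ℕ) (Δ : SC n), (∀ F ∈ Δ.faces, F.card ≤ 2) →
      (∀ a b : Fin n, ({a} : Finset (Fin n)) ∈ Δ.faces →
        ({b} : Finset (Fin n)) ∈ Δ.faces →
        Relation.ReflTransGen
          (fun x y : Fin n => ({x, y} : Finset (Fin n)) ∈ Δ.faces) a b) →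
      IsVD Δ) :=
  ⟨fun _ _ hM => SC.IsMatroid.isVD hM,
    fun _ _ h2 hconn => SC.EdgeConnected.isVD_of_card_le_two hconn h2⟩
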